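/- arXiv:0910.0237 — 2 statements merged into one kernel-verified Lean document; each statement's English description precedes it below -/
import Mathlib

section
/- Let (X,F) be a transitive Smale space, (Y,f) a Smale space, and π : X → Y a factor map. Then π is u-resolving (injective on unstable sets) if and only if π is u-bijective (restricts to a bijection from W^u(x) onto W^u(π(x)) for every x ∈ X). -/
open Filter Topology Set

/-- `f` is expansive with expansive constant `c`. -/
def Expansive {X : Type*} [MetricSpace X] (f : Equiv.Perm X) (c : ℝ) : Prop :=
  ∀ p q : X, p ≠ q → ∃ n : ℤ, c < dist ((f ^ n) p) ((f ^ n) q)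

/-- The ε-stable set of `x`. -/
def Ws {X : Type*} [MetricSpace X] (f : Equiv.Perm X) (ε : ℝ) (x : X) : Set X :=
  {y | ∀ n : ℕ, dist ((f ^ (n : ℤ)) x) ((f ^ (n : ℤ)) y) < ε}

/-- The ε-unstable set of `x`. -/
def Wu {X : Type*} [MetricSpace X] (f : Equiv.Perm X) (ε : ℝ) (x : X) : Set X :=
  {y | ∀ n : ℕ, dist ((f ^ (-(n : ℤ))) x) ((f ^ (-(n : ℤ))) y) < ε}

/-- The stable set of `x`. -/
def stableSet {X : Type*} [MetricSpace X] (f : Equiv.Perm X) (x : X) : Set X :=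
  {y | Filter.Tendsto (fun n : ℕ => dist ((f ^ (n : ℤ)) x) ((f ^ (n : ℤ)) y))
    Filter.atTop (nhds 0)}

/-- The unstable set of `x`. -/
def unstableSet {X : Type*} [MetricSpace X] (f : Equiv.Perm X) (x : X) : Set X :=
  {y | Filter.Tendsto (fun n : ℕ => dist ((f ^ (-(n : ℤ))) x) ((f ^ (-(n : ℤ))) y))
    Filter.atTop (nhds 0)}

/-- Canonical coordinates: for all sufficiently small ε > 0 there is δ > 0 such that
points at distance < δ have a unique bracket `[x,y] = W^s_ε(x) ∩ W^u_ε(y)`. -/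
def CanonicalCoords {X : Type*} [MetricSpace X] (f : Equiv.Perm X) : Prop :=
  ∃ ε₀ > 0, ∀ ε : ℝ, 0 < ε → ε ≤ ε₀ → ∃ δ > 0, ∀ x y : X, dist x y < δ →
    ∃! z, z ∈ Ws f ε x ∩ Wu f ε y

/-- A Smale space: an expansive homeomorphism with canonical coordinates. -/
def IsSmale {X : Type*} [MetricSpace X] (f : Equiv.Perm X) : Prop :=
  Continuous (⇑f) ∧ Continuous (⇑f.symm) ∧ (∃ c > 0, Expansive f c) ∧ CanonicalCoords f

/-- Topological transitivity. -/
def TopTransitive {X : Type*} [MetricSpace X] (f : Equiv.Perm X) : Prop :=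
  ∀ U V : Set X, IsOpen U → IsOpen V → U.Nonempty → V.Nonempty →
    ∃ n : ℕ, ((f ^ (n : ℤ)) ⁻¹' U ∩ V).Nonempty

/-- A periodic point of `f`. -/
def IsPeriodicPoint {X : Type*} [MetricSpace X] (f : Equiv.Perm X) (p : X) : Prop :=
  ∃ N : ℕ, 0 < N ∧ (f ^ (N : ℤ)) p = p

/-- A factor map (surjective continuous semiconjugacy). -/
def IsFactorMap {X Y : Type*} [MetricSpace X] [MetricSpace Y]
    (F : Equiv.Perm X) (f : Equiv.Perm Y) (π : X → Y) : Prop :=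
  Continuous π ∧ Function.Surjective π ∧ ∀ x, π (F x) = f (π x)

/-- A map is u-resolving if it is injective on unstable sets. -/
def UResolving {X Y : Type*} [MetricSpace X] (F : Equiv.Perm X) (π : X → Y) : Prop :=
  ∀ x : X, Set.InjOn π (unstableSet F x)

/-- A map is s-resolving if it is injective on stable sets. -/
def SResolving {X Y : Type*} [MetricSpace X] (F : Equiv.Perm X) (π : X → Y) : Prop :=
  ∀ x : X, Set.InjOn π (stableSet F x)

/-!
Injectivity of `π` on unstable sets is uniform on local unstable sets (compactness and
expansiveness), so a lift of a local unstable set at `x` can be pushed forward to `F x`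
without growing. By Baire's theorem `π` is open at some point `x_b`; near `x_b` the local
product structures of `X` and `Y` lift local unstable sets of `Y`. Pushing such lifts along
a dense forward orbit that starts near `x_b`, and passing to limits, lifts local unstable
sets at every point; since unstable sets are exhausted by backward images of local ones,
`π` maps `W^u(x)` onto `W^u(π x)`.
-/

open Function TopologicalSpace

/-- A form of Fort's theorem. Each `π '' closure V` is closed, so its frontier is nowhere
dense; at a point outside all these frontiers, `π` maps neighbourhoods onto neighbourhoods. -/
lemma exists_nhds_le_map_nhds {X Y : Type*} [TopologicalSpace X] [CompactSpace X]
    [SecondCountableTopology X] [RegularSpace X] [Nonempty X] [TopologicalSpace Y]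
    [T2Space Y] [BaireSpace Y] {π : X → Y} (hπ : Continuous π) (hsurj : Surjective π) :
    ∃ x, 𝓝 (π x) ≤ map π (𝓝 x) := by
  have : Nonempty Y := Nonempty.map π ‹_›
  have hB := isBasis_countableBasis X
  have hK : ∀ V, IsClosed (π '' closure V) := fun V =>
    (isClosed_closure.isCompact.image hπ).isClosed
  obtain ⟨y, hy⟩ := (dense_biInter_of_isOpen (f := fun V => (frontier (π '' closure V))ᶜ)
    (fun V _ => isClosed_frontier.isOpen_compl) (countable_countableBasis X)
    (fun V _ => interior_eq_empty_iff_dense_compl.1 (interior_frontier (hK V)))).nonempty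
  obtain ⟨x, rfl⟩ := hsurj y
  refine ⟨x, fun s hs => ?_⟩
  obtain ⟨V, hVB, hxV, hVs⟩ := hB.exists_closure_subset (mem_map.1 hs)
  have hx : π x ∈ interior (π '' closure V) := by
    by_contra h
    refine mem_iInter₂.1 hy V hVB ⟨?_, h⟩
    rw [(hK V).closure_eq]
    exact mem_image_of_mem π (subset_closure hxV)
  exact mem_of_superset (isOpen_interior.mem_nhds hx)
    (interior_subset.trans (image_subset_iff.2 hVs))

lemma exists_forall_not_of_antitone_isClosed {Z : Type*} [TopologicalSpace Z]
    [CompactSpace Z] {P : ℕ → Z → Prop} (hP : ∀ k, IsClosed {z | P k z})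
    (hanti : ∀ k z, P (k + 1) z → P k z) (h : ∀ z, ∃ k, ¬ P k z) : ∃ k, ∀ z, ¬ P k z := by
  by_contra! hne
  obtain ⟨z, hz⟩ := IsCompact.nonempty_iInter_of_sequence_nonempty_isCompact_isClosed
    (fun k => {z | P k z}) (fun k z => hanti k z) hne (hP 0).isCompact hP
  obtain ⟨k, hk⟩ := h z
  exact hk (mem_iInter.1 hz k)

lemma continuous_perm_pow {X : Type*} [TopologicalSpace X] {F : Equiv.Perm X}
    (hF : Continuous F) (n : ℕ) : Continuous (F ^ n) := by
  rw [Equiv.Perm.coe_pow]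
  exact hF.iterate n

lemma inv_pow_apply_pow_add {X : Type*} (F : Equiv.Perm X) (n k : ℕ) (x : X) :
    (F⁻¹ ^ n) ((F ^ (n + k)) x) = (F ^ k) x := by
  rw [pow_add, Equiv.Perm.mul_apply, ← Equiv.Perm.mul_apply (F⁻¹ ^ n), inv_pow, inv_mul_cancel,
    Equiv.Perm.one_apply]

lemma Function.Semiconj.perm_pow {X Y : Type*} {π : X → Y} {F : Equiv.Perm X}
    {f : Equiv.Perm Y} (h : Semiconj π F f) (n : ℕ) : Semiconj π ⇑(F ^ n) ⇑(f ^ n) := by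
  simpa only [Equiv.Perm.coe_pow] using h.iterate_right n

lemma Function.Semiconj.perm_inv {X Y : Type*} {π : X → Y} {F : Equiv.Perm X}
    {f : Equiv.Perm Y} (h : Semiconj π F f) : Semiconj π ⇑F⁻¹ ⇑f⁻¹ :=
  h.inverses_right F.apply_symm_apply f.symm_apply_apply

section

variable {X Y : Type*} [MetricSpace X] [MetricSpace Y]

lemma TopTransitive.exists_mem_dense_orbit [BaireSpace X] [SecondCountableTopology X]
    {F : Equiv.Perm X} (hF : Continuous F) (hT : TopTransitive F) {U : Set X} (hU : IsOpen U)
    (hne : U.Nonempty) : ∃ x ∈ U, Dense (range fun n : ℕ => (F ^ n) x) := by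
  have hB := isBasis_countableBasis X
  have hO : Dense (⋂ V ∈ {V ∈ countableBasis X | V.Nonempty},
      ⋃ n : ℕ, (F ^ n) ⁻¹' V) := by
    refine dense_biInter_of_isOpen
      (fun V hV => isOpen_iUnion fun n => (hB.isOpen hV.1).preimage (continuous_perm_pow hF n))
      ((countable_countableBasis X).mono (sep_subset _ _))
      (fun V hV => dense_iff_inter_open.2 fun W hW hWne => ?_)
    obtain ⟨n, z, hzV, hzW⟩ := hT V W (hB.isOpen hV.1) hW hV.2 hWne
    exact ⟨z, hzW, mem_iUnion.2 ⟨n, by simpa using hzV⟩⟩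
  obtain ⟨x, hxU, hx⟩ := hO.inter_open_nonempty U hU hne
  refine ⟨x, hxU, hB.dense_iff.2 fun V hV hVne => ?_⟩
  obtain ⟨n, hn⟩ := mem_iUnion.1 (mem_iInter₂.1 hx V ⟨hV, hVne⟩)
  exact ⟨_, hn, n, rfl⟩

/-- The closed `ε`-stable set; `closedWs F⁻¹ ε x` is the closed `ε`-unstable set. -/
def closedWs (F : Equiv.Perm X) (ε : ℝ) (x : X) : Set X :=
  {y | ∀ n : ℕ, dist ((F ^ n) x) ((F ^ n) y) ≤ ε}

section closedWs

variable {F : Equiv.Perm X} {a b ε : ℝ} {w x y : X}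

lemma Ws_subset_closedWs : Ws F ε x ⊆ closedWs F ε x :=
  fun y hy n => by simpa using (hy n).le

lemma Wu_subset_closedWs_inv : Wu F ε x ⊆ closedWs F⁻¹ ε x :=
  fun y hy n => by simpa [zpow_neg, inv_pow] using (hy n).le

lemma closedWs_mono (h : a ≤ b) : closedWs F a x ⊆ closedWs F b x :=
  fun _ hy n => (hy n).trans h

lemma mem_closedWs_comm : y ∈ closedWs F a x ↔ x ∈ closedWs F a y := by
  simp only [closedWs, mem_ofPred_eq, dist_comm]

lemma mem_closedWs_add (hx : x ∈ closedWs F a w) (hy : y ∈ closedWs F b w) :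
    y ∈ closedWs F (a + b) x :=
  fun n => (dist_triangle_left _ _ ((F ^ n) w)).trans (add_le_add (hx n) (hy n))

lemma dist_le_of_mem_closedWs (h : y ∈ closedWs F a x) : dist x y ≤ a := by
  simpa using h 0

lemma mem_closedWs_iff_apply :
    y ∈ closedWs F a x ↔ dist x y ≤ a ∧ F y ∈ closedWs F a (F x) := by
  refine ⟨fun h => ⟨dist_le_of_mem_closedWs h, fun n => ?_⟩, fun ⟨h0, h⟩ n => ?_⟩
  · simpa only [pow_succ, Equiv.Perm.mul_apply] using h (n + 1)
  · cases n with
    | zero => simpa using h0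
    | succ n => simpa only [pow_succ, Equiv.Perm.mul_apply] using h n

lemma isClosed_setOf_mem_closedWs (hF : Continuous F) (a : ℝ) :
    IsClosed {p : X × X | p.2 ∈ closedWs F a p.1} := by
  have h : {p : X × X | p.2 ∈ closedWs F a p.1} =
      ⋂ n : ℕ, {p | dist ((F ^ n) p.1) ((F ^ n) p.2) ≤ a} := by
    ext p
    simp [closedWs]
  rw [h]
  exact isClosed_iInter fun n => isClosed_le
    (((continuous_perm_pow hF n).comp continuous_fst).dist
      ((continuous_perm_pow hF n).comp continuous_snd)) continuous_const

lemma Function.Semiconj.mapsTo_closedWs {π : X → Y} {f : Equiv.Perm Y}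
    (hcom : Semiconj π F f) (hmod : ∀ x y, dist x y ≤ a → dist (π x) (π y) ≤ b) (x : X) :
    MapsTo π (closedWs F a x) (closedWs f b (π x)) :=
  fun y hy n => by simpa only [(hcom.perm_pow n).eq] using hmod _ _ (hy n)

end closedWs

section stableSet

variable {F : Equiv.Perm X} {x y : X}

lemma unstableSet_eq_stableSet_inv (F : Equiv.Perm X) (x : X) :
    unstableSet F x = stableSet F⁻¹ x := by
  ext y
  simp [unstableSet, stableSet, zpow_neg, inv_pow]

lemma mem_stableSet_iff :
    y ∈ stableSet F x ↔ Tendsto (fun n : ℕ => dist ((F ^ n) x) ((F ^ n) y)) atTop (𝓝 0) := by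
  simp [stableSet]

lemma mem_stableSet_self : x ∈ stableSet F x := by
  simp [mem_stableSet_iff]

lemma pow_mem_stableSet_pow_iff (k : ℕ) :
    (F ^ k) y ∈ stableSet F ((F ^ k) x) ↔ y ∈ stableSet F x := by
  simp only [mem_stableSet_iff, ← Equiv.Perm.mul_apply, ← pow_add]
  exact tendsto_add_atTop_iff_nat (f := fun n => dist ((F ^ n) x) ((F ^ n) y)) k

lemma mapsTo_stableSet [CompactSpace X] {π : X → Y} {f : Equiv.Perm Y} (hπ : Continuous π)
    (hcom : Semiconj π F f) (x : X) : MapsTo π (stableSet F x) (stableSet f (π x)) := by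
  intro y hy
  rw [mem_stableSet_iff] at hy ⊢
  have h := Tendsto.comp (CompactSpace.uniformContinuous_of_continuous hπ)
    ((tendsto_uniformity_iff_dist_tendsto_zero (f := fun n : ℕ => ((F ^ n) x, (F ^ n) y))).2 hy)
  simpa only [comp_apply, fun n => (hcom.perm_pow n).eq] using
    tendsto_uniformity_iff_dist_tendsto_zero.1 h

end stableSet

section Expansive

variable {F : Equiv.Perm X} {a b c ε : ℝ} {x y : X}

lemma Expansive.inv (hc : Expansive F c) : Expansive F⁻¹ c := fun p q hpq => by
  obtain ⟨n, hn⟩ := hc p q hpq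
  exact ⟨-n, by simpa [inv_zpow'] using hn⟩

lemma Expansive.eq_of_mem_closedWs (hc : Expansive F c) (ha : a < c) (hb : b < c)
    (hs : y ∈ closedWs F a x) (hu : y ∈ closedWs F⁻¹ b x) : x = y := by
  by_contra hxy
  obtain ⟨n | n, hn⟩ := hc x y hxy
  · have := hs n
    simp only [Int.ofNat_eq_natCast, zpow_natCast] at hn
    linarith
  · have := hu (n + 1)
    simp only [zpow_negSucc, inv_pow] at hn this
    linarith

lemma Expansive.exists_nat_dist_lt [CompactSpace X] (hF : Continuous F)
    (hF' : Continuous F.symm) (hc : Expansive F c) (hε : ε < c) {γ : ℝ} (hγ : 0 < γ) :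
    ∃ N : ℕ, ∀ x y, (∀ n ≤ N, dist ((F ^ n) x) ((F ^ n) y) ≤ ε ∧
      dist ((F⁻¹ ^ n) x) ((F⁻¹ ^ n) y) ≤ ε) → dist x y < γ := by
  set P : ℕ → X × X → Prop := fun N p => γ ≤ dist p.1 p.2 ∧
    ∀ n ≤ N, dist ((F ^ n) p.1) ((F ^ n) p.2) ≤ ε ∧ dist ((F⁻¹ ^ n) p.1) ((F⁻¹ ^ n) p.2) ≤ ε
  have hcont : ∀ G : Equiv.Perm X, Continuous G → ∀ n : ℕ,
      Continuous fun p : X × X => dist ((G ^ n) p.1) ((G ^ n) p.2) := fun G hG n =>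
    ((continuous_perm_pow hG n).comp continuous_fst).dist
      ((continuous_perm_pow hG n).comp continuous_snd)
  have hclosed : ∀ N, IsClosed {p | P N p} := fun N => by
    have hconst : ∀ r : ℝ, Continuous fun _ : X × X => r := fun r => continuous_const
    convert (isClosed_le (hconst γ) continuous_dist).inter (isClosed_biInter (s := Iic N)
      fun n _ => (isClosed_le (hcont F hF n) (hconst ε)).inter
        (isClosed_le (hcont F⁻¹ hF' n) (hconst ε))) using 1
    ext p
    simp [P]
  have hP : ∀ p, ∃ N, ¬ P N p := fun p => by
    by_contra! h
    have hp := hc.eq_of_mem_closedWs hε hε (fun n => ((h n).2 n le_rfl).1)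
      (fun n => ((h n).2 n le_rfl).2)
    have := (h 0).1
    rw [hp, dist_self] at this
    linarith
  obtain ⟨N, hN⟩ := exists_forall_not_of_antitone_isClosed hclosed
    (fun N p h => ⟨h.1, fun n hn => h.2 n (hn.trans N.le_succ)⟩) hP
  exact ⟨N, fun x y h => not_le.1 fun hγ' => hN (x, y) ⟨hγ', h⟩⟩

lemma Expansive.closedWs_subset_stableSet [CompactSpace X] (hF : Continuous F)
    (hF' : Continuous F.symm) (hc : Expansive F c) (hε : ε < c) (x : X) :
    closedWs F ε x ⊆ stableSet F x := by
  intro y hy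
  rw [mem_stableSet_iff]
  refine tendsto_order.2 ⟨fun a ha => .of_forall fun n => ha.trans_le dist_nonneg,
    fun γ hγ => ?_⟩
  obtain ⟨N, hN⟩ := hc.exists_nat_dist_lt hF hF' hε hγ
  refine eventually_atTop.2 ⟨N, fun m hm => hN _ _ fun n hn => ⟨?_, ?_⟩⟩
  · simpa only [← Equiv.Perm.mul_apply, ← pow_add] using hy (n + m)
  · obtain ⟨k, rfl⟩ := Nat.exists_eq_add_of_le (hn.trans hm)
    simpa only [inv_pow_apply_pow_add] using hy k

end Expansive

lemma Expansive.exists_dist_lt_of_dist_image_le [CompactSpace X] {G : Equiv.Perm X}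
    {π : X → Y} {c ε ρ : ℝ} (hG : Continuous G) (hG' : Continuous G.symm)
    (hc : Expansive G c) (hε : ε < c) (hπ : Continuous π) (hinj : ∀ x, InjOn π (stableSet G x))
    (hρ : 0 < ρ) :
    ∃ γ > 0, ∀ a b, G b ∈ closedWs G ε (G a) → dist (π a) (π b) ≤ γ → dist a b < ρ := by
  set P : ℕ → X × X → Prop := fun k p => G p.2 ∈ closedWs G ε (G p.1) ∧
    dist (π p.1) (π p.2) ≤ 1 / ((k : ℝ) + 1) ∧ ρ ≤ dist p.1 p.2
  have hclosed : ∀ k, IsClosed {p | P k p} := fun k =>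
    ((isClosed_setOf_mem_closedWs hG ε).preimage (hG.prodMap hG)).inter
      ((isClosed_le ((hπ.comp continuous_fst).dist (hπ.comp continuous_snd))
        continuous_const).inter (isClosed_le continuous_const continuous_dist))
  have hanti : ∀ k p, P (k + 1) p → P k p := fun k p ⟨h₁, h₂, h₃⟩ =>
    ⟨h₁, h₂.trans (one_div_le_one_div_of_le (by positivity) (by push_cast; linarith)), h₃⟩
  have hP : ∀ p, ∃ k, ¬ P k p := fun ⟨a, b⟩ => by
    by_contra! h
    have hπab : π a = π b := dist_le_zero.1
      (ge_of_tendsto' tendsto_one_div_add_atTop_nhds_zero_nat fun k => (h k).2.1)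
    have hb : b ∈ stableSet G a := by
      rw [← pow_mem_stableSet_pow_iff 1]
      simpa using hc.closedWs_subset_stableSet hG hG' hε _ (h 0).1
    have hρ' := (h 0).2.2
    rw [hinj a mem_stableSet_self hb hπab, dist_self] at hρ'
    linarith
  obtain ⟨k, hk⟩ := exists_forall_not_of_antitone_isClosed hclosed hanti hP
  exact ⟨1 / ((k : ℝ) + 1), by positivity,
    fun a b h₁ h₂ => not_le.1 fun h₃ => hk (a, b) ⟨h₁, h₂, h₃⟩⟩

lemma CanonicalCoords.exists_bracket {F : Equiv.Perm X} (hF : CanonicalCoords F) {s : ℝ}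
    (hs : 0 < s) : ∃ δ > 0, ∀ x y, dist x y < δ → (Ws F s x ∩ Wu F s y).Nonempty := by
  obtain ⟨ε₀, hε₀, h⟩ := hF
  obtain ⟨δ, hδ, hδ'⟩ := h (min s ε₀) (lt_min hs hε₀) (min_le_right _ _)
  refine ⟨δ, hδ, fun x y hxy => ?_⟩
  obtain ⟨z, hz, -⟩ := hδ' x y hxy
  exact ⟨z, fun n => (hz.1 n).trans_le (min_le_left _ _),
    fun n => (hz.2 n).trans_le (min_le_left _ _)⟩

def LiftsUnstable (F : Equiv.Perm X) (f : Equiv.Perm Y) (π : X → Y) (α ε : ℝ) (x : X) : Prop :=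
  closedWs f⁻¹ α (π x) ⊆ π '' closedWs F⁻¹ ε x

section Lifting

variable {F : Equiv.Perm X} {f : Equiv.Perm Y} {π : X → Y} {c ε α : ℝ}

lemma LiftsUnstable.mono {α' : ℝ} {x : X} (h : LiftsUnstable F f π α ε x) (hα : α' ≤ α) :
    LiftsUnstable F f π α' ε x :=
  (closedWs_mono hα).trans h

/-- Near a point where `π` is open, the brackets `[y, π x]` in `Y` lift to brackets in `X`, and
`π` maps the lifted bracket `[z, x]` to `y`. -/
lemma exists_isOpen_liftsUnstable [CompactSpace X] [Nonempty X] [BaireSpace Y]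
    (hπ : Continuous π) (hsurj : Surjective π) (hcom : Semiconj π F f) (hF : CanonicalCoords F)
    (hf : CanonicalCoords f) (hc : 0 < c) (hexp : Expansive f c) (hε : 0 < ε) :
    ∃ α > 0, ∃ U : Set X, IsOpen U ∧ U.Nonempty ∧ ∀ x ∈ U, LiftsUnstable F f π α ε x := by
  obtain ⟨xb, hxb⟩ := exists_nhds_le_map_nhds hπ hsurj
  -- all scales in `Y` are at most `c / 3`, so any two of them add up to less than `c`
  obtain ⟨d, hd, hmod⟩ := Metric.uniformContinuous_iff_le.1
    (CompactSpace.uniformContinuous_of_continuous hπ) (c / 3) (by positivity)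
  obtain ⟨δ, hδ, hbrX⟩ := hF.exists_bracket (lt_min hε hd)
  obtain ⟨γ, hγ, hball⟩ := Metric.mem_nhds_iff.1
    (hxb (image_mem_map (Metric.ball_mem_nhds xb (half_pos hδ))))
  set s := min (c / 3) (γ / 2)
  obtain ⟨δs, hδs, hbrY⟩ := hf.exists_bracket (s := s) (by positivity)
  set α := min (c / 3) (δs / 2)
  refine ⟨α, by positivity, Metric.ball xb (δ / 2) ∩ π ⁻¹' Metric.ball (π xb) (γ / 2),
    Metric.isOpen_ball.inter (Metric.isOpen_ball.preimage hπ), ⟨xb, by simp [hδ, hγ]⟩, ?_⟩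
  rintro x ⟨hx, hπx⟩ y hy
  rw [Metric.mem_ball] at hx
  rw [mem_preimage, Metric.mem_ball] at hπx
  have hyx : dist y (π x) < δs := by
    rw [dist_comm]
    linarith [dist_le_of_mem_closedWs hy, min_le_right (c / 3) (δs / 2)]
  obtain ⟨w, hws, hwu⟩ := hbrY y (π x) hyx
  have hwx : dist (π x) w < s := by simpa using hwu 0
  obtain ⟨z, hz, hzw⟩ := hball (show w ∈ Metric.ball (π xb) γ by
    rw [Metric.mem_ball]
    linarith [dist_triangle_left w (π xb) (π x), min_le_right (c / 3) (γ / 2)])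
  rw [Metric.mem_ball] at hz
  obtain ⟨z', hz's, hz'u⟩ := hbrX z x (by linarith [dist_triangle_right z x xb])
  have hmod' : ∀ p q, dist p q ≤ min ε d → dist (π p) (π q) ≤ c / 3 :=
    fun p q h => hmod (h.trans (min_le_right _ _))
  have hs : y ∈ closedWs f s w := mem_closedWs_comm.1 (Ws_subset_closedWs hws)
  have hs' : π z' ∈ closedWs f (c / 3) w :=
    hzw ▸ hcom.mapsTo_closedWs hmod' z (Ws_subset_closedWs hz's)
  have hu' : π z' ∈ closedWs f⁻¹ (c / 3) (π x) :=
    hcom.perm_inv.mapsTo_closedWs hmod' x (Wu_subset_closedWs_inv hz'u)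
  refine ⟨z', closedWs_mono (min_le_left _ _) (Wu_subset_closedWs_inv hz'u),
    (hexp.eq_of_mem_closedWs ?_ ?_ (mem_closedWs_add hs hs') (mem_closedWs_add hy hu')).symm⟩
  · linarith [min_le_left (c / 3) (γ / 2)]
  · linarith [min_le_left (c / 3) (δs / 2)]

/-- Uniform injectivity of `π` on local unstable sets keeps the lift `F z` of a point of the
local unstable set of `π (F x)` within `ε` of `F x`. -/
lemma UResolving.exists_forall_liftsUnstable_pow [CompactSpace X] (hres : UResolving F π)
    (hF : Continuous F) (hF' : Continuous F.symm) (hexp : Expansive F c) (hε : ε < c)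
    (hε₀ : 0 < ε) (hπ : Continuous π) (hcom : Semiconj π F f) :
    ∃ γ > 0, ∀ α ≤ γ, ∀ x, LiftsUnstable F f π α ε x →
      ∀ n : ℕ, LiftsUnstable F f π α ε ((F ^ n) x) := by
  obtain ⟨γ, hγ, hU⟩ := hexp.inv.exists_dist_lt_of_dist_image_le hF' hF hε hπ
    (fun x => unstableSet_eq_stableSet_inv F x ▸ hres x) hε₀
  have step : ∀ α ≤ γ, ∀ x, LiftsUnstable F f π α ε x → LiftsUnstable F f π α ε (F x) := by
    intro α hα x hx y hy
    rw [hcom x, mem_closedWs_iff_apply] at hy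
    obtain ⟨z, hz, hπz⟩ := hx (by simpa using hy.2)
    have hFz : π (F z) = y := by rw [hcom z, hπz]; simp
    have hz' : F⁻¹ (F z) ∈ closedWs F⁻¹ ε (F⁻¹ (F x)) := by
      simpa only [Equiv.Perm.coe_inv, Equiv.symm_apply_apply] using hz
    refine ⟨F z, mem_closedWs_iff_apply.2 ⟨(hU (F x) (F z) hz' ?_).le, hz'⟩, hFz⟩
    rw [hFz, hcom x]
    exact hy.1.trans hα
  refine ⟨γ, hγ, fun α hα x hx n => ?_⟩
  induction n with
  | zero => simpa using hx
  | succ n ih =>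
    rw [pow_succ', Equiv.Perm.mul_apply]
    exact step α hα _ ih

/-- The pairs `(x', z)` with `π z` the bracket `[y, π x']` form a closed set; its projection
contains the points of `D` near `x`, hence `x`, and at `x` that bracket is `y` itself. -/
lemma exists_forall_liftsUnstable_of_dense [CompactSpace X] (hF' : Continuous F.symm)
    (hf : Continuous f) (hf' : Continuous f.symm) (hπ : Continuous π)
    (hcoord : CanonicalCoords f) (hc : 0 < c) (hexp : Expansive f c) (hα : 0 < α) {D : Set X}
    (hD : Dense D) (hlift : ∀ x ∈ D, LiftsUnstable F f π α ε x) :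
    ∃ α₂ > 0, ∀ x, LiftsUnstable F f π α₂ ε x := by
  set a := min α (c / 3)
  obtain ⟨δ, hδ, hbr⟩ := hcoord.exists_bracket (s := a) (by positivity)
  refine ⟨min (c / 3) (δ / 2), by positivity, fun x y hy => ?_⟩
  set S := {p : X × X | p.2 ∈ closedWs F⁻¹ ε p.1 ∧ π p.2 ∈ closedWs f a y ∧
    π p.2 ∈ closedWs f⁻¹ a (π p.1)}
  have hS : IsClosed S := (isClosed_setOf_mem_closedWs hF' ε).inter
    (((isClosed_setOf_mem_closedWs hf a).preimage
      (continuous_const.prodMk (hπ.comp continuous_snd))).inter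
    ((isClosed_setOf_mem_closedWs hf' a).preimage
      ((hπ.comp continuous_fst).prodMk (hπ.comp continuous_snd))))
  set O := {x' | dist y (π x') < δ}
  have hO : IsOpen O := isOpen_lt (continuous_const.dist hπ) continuous_const
  have hxO : x ∈ O := by
    change dist y (π x) < δ
    rw [dist_comm]
    linarith [dist_le_of_mem_closedWs hy, min_le_right (c / 3) (δ / 2)]
  have hOD : O ∩ D ⊆ Prod.fst '' S := by
    rintro x' ⟨hx'O, hx'D⟩
    obtain ⟨w, hws, hwu⟩ := hbr y (π x') hx'O
    obtain ⟨z, hz, rfl⟩ :=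
      hlift x' hx'D (closedWs_mono (min_le_left _ _) (Wu_subset_closedWs_inv hwu))
    exact ⟨(x', z), ⟨hz, Ws_subset_closedWs hws, Wu_subset_closedWs_inv hwu⟩, rfl⟩
  obtain ⟨⟨x₁, z⟩, ⟨hz, hzs, hzu⟩, rfl⟩ :=
    (hS.isCompact.image continuous_fst).isClosed.closure_subset_iff.2 hOD
      (hD.open_subset_closure_inter hO hxO)
  refine ⟨z, hz, (hexp.eq_of_mem_closedWs (b := min (c / 3) (δ / 2) + a) ?_ ?_ hzs
    (mem_closedWs_add hy hzu)).symm⟩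
  · linarith [min_le_right α (c / 3)]
  · linarith [min_le_right α (c / 3), min_le_left (c / 3) (δ / 2)]

end Lifting

lemma surjOn_stableSet [CompactSpace X] {G : Equiv.Perm X} {g : Equiv.Perm Y} {π : X → Y}
    {c ε α : ℝ} (hG : Continuous G) (hG' : Continuous G.symm) (hexp : Expansive G c)
    (hε : ε < c) (hcom : Semiconj π G g) (hα : 0 < α)
    (hlift : ∀ x, closedWs g α (π x) ⊆ π '' closedWs G ε x) (x : X) :
    SurjOn π (stableSet G x) (stableSet g (π x)) := by
  intro y hy
  rw [mem_stableSet_iff] at hy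
  obtain ⟨N, hN⟩ := eventually_atTop.1 ((tendsto_order.1 hy).2 α hα)
  have hyN : (g ^ N) y ∈ closedWs g α (π ((G ^ N) x)) := fun n => by
    rw [(hcom.perm_pow N).eq]
    simpa only [← Equiv.Perm.mul_apply, ← pow_add] using
      (hN (n + N) (Nat.le_add_left N n)).le
  obtain ⟨z, hz, hπz⟩ := hlift _ hyN
  refine ⟨(G ^ N)⁻¹ z, ?_, (g ^ N).injective ?_⟩
  · rw [← pow_mem_stableSet_pow_iff N]
    simpa using hexp.closedWs_subset_stableSet hG hG' hε _ hz
  · rw [← (hcom.perm_pow N).eq]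
    simpa using hπz

end

/-- A factor map from a transitive Smale space to a Smale space is
u-resolving iff it is u-bijective. -/
theorem stmt8 {X Y : Type*} [MetricSpace X] [CompactSpace X] [MetricSpace Y] [CompactSpace Y]
    (F : Equiv.Perm X) (f : Equiv.Perm Y)
    (hX : IsSmale F) (hXt : TopTransitive F) (hY : IsSmale f)
    (π : X → Y) (hπ : IsFactorMap F f π) :
    UResolving F π ↔ ∀ x : X, Set.BijOn π (unstableSet F x) (unstableSet f (π x)) := by
  obtain ⟨hπc, hπs, hcom⟩ := hπ
  obtain ⟨hFc, hFc', ⟨cX, hcX, hexpX⟩, hccX⟩ := hX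
  obtain ⟨hfc, hfc', ⟨cY, hcY, hexpY⟩, hccY⟩ := hY
  refine ⟨fun hres x => ?_, fun h x => (h x).injOn⟩
  have : Nonempty X := ⟨x⟩
  obtain ⟨γ, hγ, hpush⟩ := hres.exists_forall_liftsUnstable_pow hFc hFc' hexpX
    (half_lt_self hcX) (half_pos hcX) hπc hcom
  obtain ⟨α, hα, U, hU, hUne, hseed⟩ :=
    exists_isOpen_liftsUnstable hπc hπs hcom hccX hccY hcY hexpY (half_pos hcX)
  obtain ⟨x₀, hx₀U, hx₀⟩ := hXt.exists_mem_dense_orbit hFc hU hUne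
  obtain ⟨α₂, hα₂, hlift⟩ := exists_forall_liftsUnstable_of_dense hFc' hfc hfc' hπc hccY hcY
    hexpY (lt_min hα hγ) hx₀ (by
      rintro _ ⟨n, rfl⟩
      exact hpush _ (min_le_right _ _) x₀ ((hseed x₀ hx₀U).mono (min_le_left _ _)) n)
  rw [unstableSet_eq_stableSet_inv, unstableSet_eq_stableSet_inv]
  exact ⟨mapsTo_stableSet hπc (Semiconj.perm_inv hcom) x,
    unstableSet_eq_stableSet_inv F x ▸ hres x,
    surjOn_stableSet hFc' hFc hexpX.inv (half_lt_self hcX) (Semiconj.perm_inv hcom) hα₂ hlift x⟩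
end

section
/- Let (Y,f) be an almost Smale system: (X,g) a transitive Smale space and θ : X → Y a factor map that is one-to-one almost everywhere, u-resolving, and s-resolving. If (X', g') is an irreducible Smale space and φ : X' → Y a factor map, then φ factors through θ: there exists a factor map ρ : X' → X with φ = θ ∘ ρ. -/
open Filter Topology Set

/-!
Bi-resolving forces the fibres of `θ` to be uniformly separated, so the set `L` of points of `Y`
with a single `θ`-preimage is open; it is `f`-invariant and dense. Over `L` the lift `θ⁻¹ ∘ φ` is
defined and continuous, and `ρ` is read off the closure of its graph. That closure is again a
graph: for `p, q` over the same point `w'`, take points `t', r'` near `w'` whose forward, resp.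
backward, orbits pass over a ball inside `L`, where `θ` is uniformly injective, and lift their
bracket. Since close images force close points below the separation scale, closeness propagates
along orbits from the passage over the ball, so in the limit the lift of the bracket lies in the
fibre of `p` and `q`, on the stable set of `p` and the unstable set of `q`; hence `p = q`. The
graph being closed gives continuity, and transitivity of `X` together with density of `θ⁻¹ L`
gives surjectivity.
-/

open Metric

theorem Int.forall_mem_Icc_of_succ_of_pred {P : ℤ → Prop} {lo hi k : ℤ} (hk : k ∈ Icc lo hi)
    (hPk : P k) (hsucc : ∀ n, k ≤ n → n < hi → P n → P (n + 1))
    (hpred : ∀ n, lo < n → n ≤ k → P n → P (n - 1)) : ∀ n ∈ Icc lo hi, P n := by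
  intro n hn
  rcases le_total k n with hkn | hnk
  · induction n, hkn using Int.leInduction with
    | base => exact hPk
    | succ n hkn ih => exact hsucc n hkn (by grind) (ih ⟨by grind, by grind⟩)
  · induction n, hnk using Int.leInductionDown with
    | base => exact hPk
    | pred n hnk ih => exact hpred n (by grind) hnk (ih ⟨by grind, by grind⟩)

theorem tendsto_of_forall_dist_lt_one_div {Z : Type*} [PseudoMetricSpace Z] {a : ℕ → Z} {z : Z}
    (h : ∀ j : ℕ, dist (a j) z < 1 / ((j : ℝ) + 1)) : Tendsto a atTop (𝓝 z) :=
  tendsto_iff_dist_tendsto_zero.mpr <| squeeze_zero (fun _ ↦ dist_nonneg) (fun j ↦ (h j).le)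
    tendsto_one_div_add_atTop_nhds_zero_nat

theorem continuous_of_isClosed_graph {X' X : Type*} [TopologicalSpace X'] [TopologicalSpace X]
    [CompactSpace X] {ρ : X' → X} (h : IsClosed {p : X' × X | p.2 = ρ p.1}) : Continuous ρ := by
  refine continuous_iff_isClosed.mpr fun C hC ↦ ?_
  have : ρ ⁻¹' C = Prod.fst '' ({p : X' × X | p.2 = ρ p.1} ∩ Prod.snd ⁻¹' C) := by
    ext x'
    constructor
    · exact fun hx' ↦ ⟨(x', ρ x'), ⟨rfl, hx'⟩, rfl⟩
    · rintro ⟨⟨y', x⟩, ⟨hx, hxC⟩, rfl⟩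
      exact (show x = ρ y' from hx) ▸ hxC
  rw [this]
  exact isClosedMap_fst_of_compactSpace _ (h.inter (hC.preimage continuous_snd))

namespace Equiv.Perm

variable {X Y : Type*}

theorem continuous_zpow [TopologicalSpace X] {g : Perm X} (hg : Continuous g)
    (hg' : Continuous g.symm) (n : ℤ) : Continuous ⇑(g ^ n) := by
  induction n using Int.induction_on with
  | zero => exact continuous_id
  | succ n ih => rw [zpow_add_one, coe_mul]; exact ih.comp hg
  | pred n ih => rw [zpow_sub_one, coe_mul, inv_def]; exact ih.comp hg'

theorem semiconj_zpow {g : Perm X} {f : Perm Y} {θ : X → Y} (h : ∀ x, θ (g x) = f (θ x))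
    (n : ℤ) (x : X) : θ ((g ^ n) x) = (f ^ n) (θ x) := by
  have hinv : ∀ x, θ (g.symm x) = f.symm (θ x) := fun x ↦ by
    rw [eq_symm_apply, ← h, apply_symm_apply]
  induction n using Int.induction_on generalizing x with
  | zero => rfl
  | succ n ih => rw [zpow_add_one, zpow_add_one, mul_apply, mul_apply, ih, h]
  | pred n ih =>
    rw [zpow_sub_one, zpow_sub_one, mul_apply, mul_apply, inv_def, inv_def, ih, hinv]

theorem zpow_mem_iff_of_forall_mem_iff {g : Perm X} {s : Set X} (h : ∀ x, g x ∈ s ↔ x ∈ s)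
    (n : ℤ) (x : X) : (g ^ n) x ∈ s ↔ x ∈ s := by
  induction n using Int.induction_on generalizing x with
  | zero => rfl
  | succ n ih => rw [zpow_add_one, mul_apply, ih, h]
  | pred n ih => rw [zpow_sub_one, mul_apply, ih, inv_def, ← h, apply_symm_apply]

end Equiv.Perm

section Expansive

variable {X : Type*} [MetricSpace X] {f : Equiv.Perm X} {c : ℝ}

theorem mem_stableSet_self_s11 (f : Equiv.Perm X) (x : X) : x ∈ stableSet f x := by
  simp [stableSet]

theorem mem_unstableSet_self (f : Equiv.Perm X) (x : X) : x ∈ unstableSet f x := by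
  simp [unstableSet]

theorem stableSet_inv (f : Equiv.Perm X) (x : X) : stableSet f⁻¹ x = unstableSet f x := by
  simp [stableSet, unstableSet]

theorem Expansive.eq_of_forall_dist_le (hf : Expansive f c) {p q : X}
    (h : ∀ n : ℤ, dist ((f ^ n) p) ((f ^ n) q) ≤ c) : p = q := by
  by_contra hne
  obtain ⟨n, hn⟩ := hf p q hne
  exact (h n).not_gt hn

theorem Expansive.inv_s11 (hf : Expansive f c) : Expansive f⁻¹ c := fun p q hne ↦ by
  obtain ⟨n, hn⟩ := hf p q hne
  exact ⟨-n, by simpa [inv_zpow'] using hn⟩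

/-- Pass to a limit pair `(p, q)` of `(fⁿ x, fⁿ y)` along times where they stay `ε` apart: its
whole orbit is `c`-close, so expansiveness forces `p = q`. -/
theorem Expansive.mem_stableSet_of_forall_dist_le [CompactSpace X] (hf : Expansive f c)
    (hcont : Continuous f) (hcont' : Continuous f.symm) {x y : X}
    (h : ∀ n : ℕ, dist ((f ^ (n : ℤ)) x) ((f ^ (n : ℤ)) y) ≤ c) : y ∈ stableSet f x := by
  refine Metric.tendsto_nhds.mpr fun ε hε ↦ ?_
  by_contra hfreq
  set S : Set (X × X) := {z | ε ≤ dist z.1 z.2}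
  have hS : IsClosed S := isClosed_le continuous_const (continuous_fst.dist continuous_snd)
  obtain ⟨⟨p, q⟩, hpq, ψ, hψ, hlim⟩ := hS.isCompact.tendsto_subseq'
    (x := fun n : ℕ ↦ ((f ^ (n : ℤ)) x, (f ^ (n : ℤ)) y))
    ((not_eventually.mp hfreq).mono fun n hn ↦ by simpa [S, abs_of_nonneg] using hn)
  have hψ' : Tendsto (fun k ↦ (ψ k : ℤ)) atTop atTop :=
    tendsto_natCast_atTop_atTop.comp hψ.tendsto_atTop
  have : p = q := hf.eq_of_forall_dist_le fun m ↦ by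
    have hcm := Equiv.Perm.continuous_zpow hcont hcont' m
    refine le_of_tendsto (((hcm.tendsto p).comp ((continuous_fst.tendsto _).comp hlim)).dist
      ((hcm.tendsto q).comp ((continuous_snd.tendsto _).comp hlim))) ?_
    filter_upwards [hψ'.eventually_ge_atTop (-m)] with k hk
    obtain ⟨n, hn⟩ := Int.eq_ofNat_of_zero_le (by lia : 0 ≤ m + ψ k)
    simp only [Function.comp_apply]
    rw [← Equiv.Perm.mul_apply, ← zpow_add, ← Equiv.Perm.mul_apply, ← zpow_add, hn]
    exact h n
  have hε' : ε ≤ dist p q := hpq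
  rw [this, dist_self] at hε'
  exact hε.not_ge hε'

theorem Expansive.mem_unstableSet_of_forall_dist_le [CompactSpace X] (hf : Expansive f c)
    (hcont : Continuous f) (hcont' : Continuous f.symm) {x y : X}
    (h : ∀ n : ℕ, dist ((f ^ (-(n : ℤ))) x) ((f ^ (-(n : ℤ))) y) ≤ c) :
    y ∈ unstableSet f x := by
  rw [← stableSet_inv]
  exact hf.inv_s11.mem_stableSet_of_forall_dist_le hcont' hcont (by simpa [inv_zpow'] using h)

theorem mem_Ws_iff {ε : ℝ} {x z : X} :
    z ∈ Ws f ε x ↔ ∀ n : ℤ, 0 ≤ n → dist ((f ^ n) x) ((f ^ n) z) < ε := by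
  refine ⟨fun h n hn ↦ ?_, fun h n ↦ h n n.cast_nonneg⟩
  obtain ⟨m, rfl⟩ := Int.eq_ofNat_of_zero_le hn
  exact h m

theorem mem_Wu_iff {ε : ℝ} {x z : X} :
    z ∈ Wu f ε x ↔ ∀ n : ℤ, n ≤ 0 → dist ((f ^ n) x) ((f ^ n) z) < ε := by
  refine ⟨fun h n hn ↦ ?_, fun h n ↦ h (-n) (by simp)⟩
  obtain ⟨m, rfl⟩ := Int.exists_eq_neg_ofNat hn
  exact h m

theorem CanonicalCoords.exists_bracket_s11 (hcc : CanonicalCoords f) {β : ℝ} (hβ : 0 < β) :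
    ∃ δ > 0, ∀ x y, dist x y < δ → ∃ z, z ∈ Ws f β x ∩ Wu f β y := by
  obtain ⟨β₀, hβ₀, hbr⟩ := hcc
  obtain ⟨δ, hδ, hbr⟩ := hbr (min β β₀) (by positivity) (min_le_right _ _)
  refine ⟨δ, hδ, fun x y hxy ↦ ?_⟩
  obtain ⟨z, ⟨hzs, hzu⟩, -⟩ := hbr x y hxy
  exact ⟨z, fun n ↦ (hzs n).trans_le (min_le_left _ _), fun n ↦ (hzu n).trans_le (min_le_left _ _)⟩

end Expansive

section Transitive

variable {Z Y : Type*} [MetricSpace Z] [MetricSpace Y] {h : Equiv.Perm Z}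

theorem TopTransitive.dense_of_isOpen (hZ : TopTransitive h) {U : Set Z} (hU : IsOpen U)
    (hne : U.Nonempty) (hinv : ∀ z, h z ∈ U ↔ z ∈ U) : Dense U := by
  refine dense_iff_inter_open.mpr fun V hV hVne ↦ ?_
  obtain ⟨n, z, hzU, hzV⟩ := hZ U V hU hV hne hVne
  exact ⟨z, hzV, (Equiv.Perm.zpow_mem_iff_of_forall_mem_iff hinv n z).mp hzU⟩

theorem TopTransitive.dense_preimage {f : Equiv.Perm Y} {π : Z → Y} (hZ : TopTransitive h)
    (hπ : IsFactorMap h f π) {U : Set Y} (hU : IsOpen U) (hUd : Dense U)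
    (hUf : ∀ y, f y ∈ U ↔ y ∈ U) : Dense (π ⁻¹' U) := by
  obtain ⟨hπc, hπs, hπh⟩ := hπ
  rcases isEmpty_or_nonempty Z with _ | ⟨⟨z⟩⟩
  · exact fun z ↦ isEmptyElim z
  obtain ⟨y, hy⟩ := hUd.nonempty (h := ⟨π z⟩)
  obtain ⟨z₀, rfl⟩ := hπs y
  exact hZ.dense_of_isOpen (hU.preimage hπc) ⟨z₀, hy⟩ fun z ↦ by
    simp only [mem_preimage, hπh, hUf]

theorem TopTransitive.dense_setOf_exists_zpow_natCast_mem (hZ : TopTransitive h) {U : Set Z}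
    (hU : IsOpen U) (hne : U.Nonempty) : Dense {z | ∃ n : ℕ, (h ^ (n : ℤ)) z ∈ U} :=
  dense_iff_inter_open.mpr fun V hV hVne ↦
    let ⟨n, z, hzU, hzV⟩ := hZ U V hU hV hne hVne
    ⟨z, hzV, n, hzU⟩

theorem TopTransitive.dense_setOf_exists_zpow_neg_natCast_mem (hZ : TopTransitive h)
    {U : Set Z} (hU : IsOpen U) (hne : U.Nonempty) :
    Dense {z | ∃ n : ℕ, (h ^ (-(n : ℤ))) z ∈ U} := by
  refine dense_iff_inter_open.mpr fun V hV hVne ↦ ?_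
  obtain ⟨n, z, hzV, hzU⟩ := hZ V U hV hU hVne hne
  refine ⟨(h ^ (n : ℤ)) z, hzV, n, ?_⟩
  rwa [← Equiv.Perm.mul_apply, ← zpow_add, neg_add_cancel, zpow_zero, Equiv.Perm.one_apply]

end Transitive

section FiberSeparation

variable {X Y : Type*} [MetricSpace X] [MetricSpace Y]

/-- Close points `x, y` of a fibre have a bracket `z`; then `θ z = θ x` by expansiveness of `f`,
and `z = x`, `z = y` because `θ` is s- and u-resolving. -/
theorem exists_fiber_separation [CompactSpace X] {g : Equiv.Perm X} {f : Equiv.Perm Y}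
    {θ : X → Y} {c : ℝ} (hX : IsSmale g) (hf : Expansive f c) (hc : 0 < c) (hθ : Continuous θ)
    (hθg : ∀ x, θ (g x) = f (θ x)) (hθu : UResolving g θ) (hθs : SResolving g θ) :
    ∃ δ > 0, ∀ x y, θ x = θ y → dist x y < δ → x = y := by
  obtain ⟨hg, hg', ⟨cX, hcX, hgX⟩, ε₀, hε₀, hcc⟩ := hX
  obtain ⟨κ, hκ, hθκ⟩ :=
    Metric.uniformContinuous_iff.mp (CompactSpace.uniformContinuous_of_continuous hθ) c hc
  set ε := min ε₀ (min cX κ)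
  have hεX : ε ≤ cX := (min_le_right _ _).trans (min_le_left _ _)
  have hεκ : ε ≤ κ := (min_le_right _ _).trans (min_le_right _ _)
  obtain ⟨δ, hδ, hbr⟩ := hcc ε (by positivity) (min_le_left _ _)
  refine ⟨δ, hδ, fun x y hxy hd ↦ ?_⟩
  obtain ⟨z, ⟨hzs, hzu⟩, -⟩ := hbr x y hd
  have hθz : θ x = θ z := hf.eq_of_forall_dist_le fun n ↦ by
    obtain ⟨m, rfl | rfl⟩ := Int.eq_nat_or_neg n
    · rw [← Equiv.Perm.semiconj_zpow hθg, ← Equiv.Perm.semiconj_zpow hθg]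
      exact (hθκ ((hzs m).trans_le hεκ)).le
    · rw [hxy, ← Equiv.Perm.semiconj_zpow hθg, ← Equiv.Perm.semiconj_zpow hθg]
      exact (hθκ ((hzu m).trans_le hεκ)).le
  have hzx : z = x := hθs x (hgX.mem_stableSet_of_forall_dist_le hg hg' fun n ↦
    (hzs n).le.trans hεX) (mem_stableSet_self_s11 g x) hθz.symm
  have hzy : z = y := hθu y (hgX.mem_unstableSet_of_forall_dist_le hg hg' fun n ↦
    (hzu n).le.trans hεX) (mem_unstableSet_self g y) (hθz.symm.trans hxy)
  exact hzx.symm.trans hzy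

end FiberSeparation

section InjectivityLocus

variable {X Y : Type*}

def injectivityLocus (θ : X → Y) : Set Y := {y | (θ ⁻¹' {y}).Subsingleton}

theorem apply_mem_injectivityLocus_iff {g : Equiv.Perm X} {f : Equiv.Perm Y} {θ : X → Y}
    (hθg : ∀ x, θ (g x) = f (θ x)) (y : Y) :
    f y ∈ injectivityLocus θ ↔ y ∈ injectivityLocus θ := by
  have hfib : θ ⁻¹' {f y} = g '' (θ ⁻¹' {y}) := by
    rw [Equiv.image_eq_preimage_symm]
    ext x
    simp only [mem_preimage, mem_singleton_iff]
    rw [← f.injective.eq_iff (a := θ (g.symm x)), ← hθg, Equiv.apply_symm_apply]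
  simp only [injectivityLocus, mem_ofPred_eq, hfib, g.injective.subsingleton_image_iff]

variable [MetricSpace X] [MetricSpace Y]

theorem IsClosed.exists_dist_le_of_dist_image_le [CompactSpace X] {θ : X → Y}
    (hθ : Continuous θ) {K : Set (X × X)} (hK : IsClosed K)
    (hinj : ∀ p ∈ K, θ p.1 = θ p.2 → p.1 = p.2) {γ : ℝ} (hγ : 0 < γ) :
    ∃ η > 0, ∀ p ∈ K, dist (θ p.1) (θ p.2) ≤ η → dist p.1 p.2 ≤ γ := by
  have hS : IsCompact (K ∩ {p | γ ≤ dist p.1 p.2}) :=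
    (hK.inter (_root_.isClosed_le continuous_const (continuous_fst.dist continuous_snd))).isCompact
  obtain ⟨η, hη, hηS⟩ := hS.exists_forall_le'
    ((hθ.comp continuous_fst).dist (hθ.comp continuous_snd)).continuousOn (a := 0)
    fun p hp ↦ dist_pos.mpr fun h ↦ hγ.not_ge (by simpa [hinj p hp.1 h] using hp.2)
  refine ⟨η / 2, by positivity, fun p hp hpη ↦ ?_⟩
  by_contra! hlt
  have := hηS p ⟨hp, hlt.le⟩
  simp only [Function.comp_apply] at this
  linarith

theorem exists_dist_le_of_dist_image_le_of_subset_injectivityLocus [CompactSpace X]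
    {θ : X → Y} (hθ : Continuous θ) {K : Set Y} (hK : IsClosed K)
    (hKL : K ⊆ injectivityLocus θ) {γ : ℝ} (hγ : 0 < γ) :
    ∃ η > 0, ∀ a b, θ a ∈ K → dist (θ a) (θ b) ≤ η → dist a b ≤ γ := by
  obtain ⟨η, hη, h⟩ := (hK.preimage (hθ.comp continuous_fst)).exists_dist_le_of_dist_image_le hθ
    (fun p hp hp' ↦ hKL hp rfl hp'.symm) hγ
  exact ⟨η, hη, fun a b ha ↦ h (a, b) ha⟩

theorem isOpen_injectivityLocus [CompactSpace X] {θ : X → Y} (hθ : Continuous θ) {δ : ℝ}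
    (hδ : 0 < δ) (hsep : ∀ x y, θ x = θ y → dist x y < δ → x = y) :
    IsOpen (injectivityLocus θ) := by
  have hA : (injectivityLocus θ)ᶜ =
      (fun p : X × X ↦ θ p.1) '' {p | θ p.1 = θ p.2 ∧ δ ≤ dist p.1 p.2} := by
    ext y
    simp only [injectivityLocus, Set.Subsingleton, mem_compl_iff, mem_ofPred_eq, mem_preimage,
      mem_singleton_iff, mem_image, Prod.exists, not_forall]
    constructor
    · rintro ⟨a, ha, b, hb, hab⟩
      exact ⟨a, b, ⟨ha.trans hb.symm, not_lt.mp fun h ↦ hab (hsep a b (ha.trans hb.symm) h)⟩, ha⟩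
    · rintro ⟨a, b, ⟨hab, hδab⟩, rfl⟩
      exact ⟨a, rfl, b, hab.symm, fun h ↦ hδ.not_ge (by simpa [h] using hδab)⟩
  rw [← isClosed_compl_iff, hA]
  exact ((isClosed_eq (hθ.comp continuous_fst) (hθ.comp continuous_snd)).inter
    (isClosed_le continuous_const (continuous_fst.dist continuous_snd))).isCompact.image
    (hθ.comp continuous_fst) |>.isClosed

end InjectivityLocus

section Tracking

variable {X Y : Type*} [MetricSpace X] [MetricSpace Y]

def TracksThrough (g : Equiv.Perm X) (θ : X → Y) (K : Set Y) (η γ : ℝ) : Prop :=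
  ∀ x z : X, ∀ lo hi k : ℤ, k ∈ Icc lo hi → θ ((g ^ k) x) ∈ K →
    (∀ n ∈ Icc lo hi, dist (θ ((g ^ n) x)) (θ ((g ^ n) z)) ≤ η) →
    ∀ n ∈ Icc lo hi, dist ((g ^ n) x) ((g ^ n) z) ≤ γ

/-- `γ` is chosen so that one step of `g` or `g⁻¹` keeps `γ`-close points within the separation
radius of the fibres, where `η`-close images force `γ`-closeness again; over `K` the latter holds
without any a priori bound, which starts the propagation. -/
theorem exists_tracksThrough [CompactSpace X] {g : Equiv.Perm X} {θ : X → Y}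
    (hg : Continuous g) (hg' : Continuous g.symm) (hθ : Continuous θ) {δ : ℝ} (hδ : 0 < δ)
    (hsep : ∀ x y, θ x = θ y → dist x y < δ → x = y) {K : Set Y} (hK : IsClosed K)
    (hKL : K ⊆ injectivityLocus θ) {c : ℝ} (hc : 0 < c) :
    ∃ γ > 0, γ ≤ c ∧ ∃ η > 0, TracksThrough g θ K η γ := by
  obtain ⟨κ, hκ, hgκ⟩ := Metric.uniformContinuous_iff.mp
    (CompactSpace.uniformContinuous_of_continuous hg) (δ / 2) (half_pos hδ)
  obtain ⟨κ', hκ', hgκ'⟩ := Metric.uniformContinuous_iff.mp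
    (CompactSpace.uniformContinuous_of_continuous hg') (δ / 2) (half_pos hδ)
  have hm : 0 < min c (min κ κ') := by positivity
  set γ := min c (min κ κ') / 2
  have hγ : 0 < γ := half_pos hm
  have hγκ : γ < κ := (half_lt_self hm).trans_le ((min_le_right _ _).trans (min_le_left _ _))
  have hγκ' : γ < κ' := (half_lt_self hm).trans_le ((min_le_right _ _).trans (min_le_right _ _))
  obtain ⟨η₁, hη₁, h₁⟩ := (isClosed_le (continuous_fst.dist continuous_snd) continuous_const :
      IsClosed {p : X × X | dist p.1 p.2 ≤ δ / 2}).exists_dist_le_of_dist_image_le hθ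
    (fun p hp h ↦ hsep _ _ h (hp.trans_lt (half_lt_self hδ))) hγ
  obtain ⟨η₂, hη₂, h₂⟩ := exists_dist_le_of_dist_image_le_of_subset_injectivityLocus hθ hK hKL hγ
  refine ⟨γ, hγ, (half_le_self hm.le).trans (min_le_left _ _), min η₁ η₂, by positivity, ?_⟩
  intro x z lo hi k hk hxK himg
  have hstep : ∀ n ∈ Icc lo hi, dist ((g ^ n) x) ((g ^ n) z) ≤ δ / 2 →
      dist ((g ^ n) x) ((g ^ n) z) ≤ γ := fun n hn hδn ↦
    h₁ (_, _) hδn ((himg n hn).trans (min_le_left _ _))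
  refine Int.forall_mem_Icc_of_succ_of_pred hk
    (h₂ _ _ hxK ((himg k hk).trans (min_le_right _ _)))
    (fun n hkn hnhi hn ↦ hstep (n + 1) ⟨by grind, by grind⟩ ?_)
    (fun n hlon hnk hn ↦ hstep (n - 1) ⟨by grind, by grind⟩ ?_)
  · rw [add_comm, zpow_add, zpow_one, Equiv.Perm.mul_apply, Equiv.Perm.mul_apply]
    exact (hgκ (hn.trans_lt hγκ)).le
  · rw [sub_eq_neg_add, zpow_add, zpow_neg_one, Equiv.Perm.mul_apply, Equiv.Perm.mul_apply,
      Equiv.Perm.inv_def]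
    exact (hgκ' (hn.trans_lt hγκ')).le

end Tracking

section LiftRelation

variable {X Y X' : Type*} [MetricSpace X] [MetricSpace X']
  {g : Equiv.Perm X} {f : Equiv.Perm Y} {g' : Equiv.Perm X'} {θ : X → Y} {φ : X' → Y}

/-- It turns out to be the graph of the lift `ρ : X' → X`. -/
def liftRelation (θ : X → Y) (φ : X' → Y) : Set (X' × X) :=
  closure {z | φ z.1 ∈ injectivityLocus θ ∧ θ z.2 = φ z.1}

theorem liftRelation_subset [MetricSpace Y] (hθ : Continuous θ) (hφ : Continuous φ) {z : X' × X}
    (hz : z ∈ liftRelation θ φ) : θ z.2 = φ z.1 :=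
  closure_minimal (fun _ h ↦ h.2) (isClosed_eq (hθ.comp continuous_snd) (hφ.comp continuous_fst)) hz

theorem exists_mem_liftRelation [CompactSpace X] (hθs : Function.Surjective θ)
    (hG : Dense (φ ⁻¹' injectivityLocus θ)) (x' : X') : ∃ x, (x', x) ∈ liftRelation θ φ := by
  have hsub : φ ⁻¹' injectivityLocus θ ⊆ Prod.fst '' liftRelation θ φ := fun x' hx' ↦
    let ⟨x, hx⟩ := hθs (φ x')
    ⟨(x', x), subset_closure ⟨hx', hx⟩, rfl⟩
  obtain ⟨⟨_, x⟩, hx, rfl⟩ :=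
    closure_minimal hsub (isClosedMap_fst_of_compactSpace _ isClosed_closure) (hG x')
  exact ⟨x, hx⟩

theorem map_mem_liftRelation (hg : Continuous g) (hg' : Continuous g')
    (hθg : ∀ x, θ (g x) = f (θ x)) (hφg : ∀ x', φ (g' x') = f (φ x'))
    (hLf : ∀ y, f y ∈ injectivityLocus θ ↔ y ∈ injectivityLocus θ) {x' : X'} {x : X}
    (h : (x', x) ∈ liftRelation θ φ) : (g' x', g x) ∈ liftRelation θ φ :=
  map_mem_closure (f := Prod.map g' g) (hg'.prodMap hg) h fun _ ⟨hzL, hz⟩ ↦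
    ⟨by simpa [hφg, hLf] using hzL, by simp [hθg, hφg, hz]⟩

theorem surjective_of_dense_preimage_injectivityLocus [CompactSpace X'] {ρ : X' → X}
    (hρ : Continuous ρ) (hρθ : ∀ x', θ (ρ x') = φ x') (hφs : Function.Surjective φ)
    (hdense : Dense (θ ⁻¹' injectivityLocus θ)) : Function.Surjective ρ := by
  have hsub : θ ⁻¹' injectivityLocus θ ⊆ range ρ := fun x hx ↦
    let ⟨x', hx'⟩ := hφs (θ x)
    ⟨x', hx ((hρθ x').trans hx') rfl⟩
  rw [← range_eq_univ, ← univ_subset_iff, ← hdense.closure_eq]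
  exact (isCompact_range hρ).isClosed.closure_subset_iff.mpr hsub

/-- Continuity of `θ⁻¹ ∘ φ` at points of `X'` over the injectivity locus lets us move a point of the
fibre product into any dense set `D`. -/
theorem exists_near_of_mem_liftRelation [MetricSpace Y] [CompactSpace X] (hθ : Continuous θ)
    (hθs : Function.Surjective θ) (hφ : Continuous φ) (hLo : IsOpen (injectivityLocus θ))
    {D : Set X'} (hD : Dense D) {w' : X'} {p : X} (hwp : (w', p) ∈ liftRelation θ φ) {ε : ℝ}
    (hε : 0 < ε) : ∃ t' ∈ D, ∃ x, θ x = φ t' ∧ dist t' w' < ε ∧ dist x p < ε := by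
  obtain ⟨⟨u', u⟩, ⟨huL, hu⟩, hd⟩ := Metric.mem_closure_iff.mp hwp (ε / 2) (half_pos hε)
  rw [Prod.dist_eq, max_lt_iff] at hd
  obtain ⟨s, hs, hsL⟩ := Metric.isOpen_iff.mp hLo _ huL
  obtain ⟨η, hη, hη'⟩ := exists_dist_le_of_dist_image_le_of_subset_injectivityLocus hθ
    isClosed_closedBall ((closedBall_subset_ball (half_lt_self hs)).trans hsL)
    (half_pos hε)
  obtain ⟨r, hr, hφr⟩ := Metric.continuous_iff.mp hφ u' η hη
  obtain ⟨t', htD, ht'⟩ := hD.exists_mem_open isOpen_ball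
    ⟨u', mem_ball_self (lt_min hr (half_pos hε))⟩
  have ht'u' : dist t' u' < min r (ε / 2) := ht'
  obtain ⟨x, hx⟩ := hθs (φ t')
  have hux : dist u x ≤ ε / 2 := hη' u x
    (by rw [hu]; exact mem_closedBall_self (half_pos hs).le)
    (by rw [hu, hx, dist_comm]; exact (hφr t' (ht'u'.trans_le (min_le_left _ _))).le)
  refine ⟨t', htD, x, hx, ?_, ?_⟩
  · linarith [dist_triangle t' u' w', dist_comm u' w', min_le_right r (ε / 2)]
  · linarith [dist_triangle x u p, dist_comm x u, dist_comm u p]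

end LiftRelation

section Shadowing

variable {X Y X' : Type*} [MetricSpace X] [MetricSpace Y] [MetricSpace X']
  {g : Equiv.Perm X} {f : Equiv.Perm Y} {g' : Equiv.Perm X'} {θ : X → Y} {φ : X' → Y}

theorem TracksThrough.dist_zpow_le_of_dist_zpow_lt {K : Set Y} {η γ κ : ℝ}
    (htrack : TracksThrough g θ K η γ) (hθg : ∀ x, θ (g x) = f (θ x))
    (hφg : ∀ x', φ (g' x') = f (φ x')) (hφκ : ∀ ⦃a b : X'⦄, dist a b < κ → dist (φ a) (φ b) < η)
    {x z : X} {t c : X'} (hx : θ x = φ t) (hz : θ z = φ c) {lo hi k : ℤ} (hk : k ∈ Icc lo hi)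
    (hkK : φ ((g' ^ k) t) ∈ K) (hclose : ∀ n ∈ Icc lo hi, dist ((g' ^ n) t) ((g' ^ n) c) < κ) :
    ∀ n ∈ Icc lo hi, dist ((g ^ n) x) ((g ^ n) z) ≤ γ := by
  refine htrack x z lo hi k hk ?_ fun n hn ↦ ?_
  · rwa [Equiv.Perm.semiconj_zpow hθg, hx, ← Equiv.Perm.semiconj_zpow hφg]
  · rw [Equiv.Perm.semiconj_zpow hθg, Equiv.Perm.semiconj_zpow hθg, hx, hz,
      ← Equiv.Perm.semiconj_zpow hφg, ← Equiv.Perm.semiconj_zpow hφg]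
    exact (hφκ (hclose n hn)).le

/-- Approximate `(w', p)` and `(w', q)` by points `t', r'` of `X'` whose forward, resp. backward,
orbit passes over `ball y₀ s`, and let `c'` be their bracket. The orbit of any lift `m` of `c'`
tracks the lifts of `t'` forward and of `r'` backward, starting from the passage over the ball. -/
theorem exists_shadow_of_mem_liftRelation [CompactSpace X] [CompactSpace X']
    (hθ : IsFactorMap g f θ) (hφ : IsFactorMap g' f φ) (hLo : IsOpen (injectivityLocus θ))
    (hcc' : CanonicalCoords g') (hX't : TopTransitive g') {y₀ : Y} {s η γ : ℝ} (hs : 0 < s)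
    (hη : 0 < η) (htrack : TracksThrough g θ (closedBall y₀ s) η γ) {w' : X'} {p q : X}
    (hp : (w', p) ∈ liftRelation θ φ) (hq : (w', q) ∈ liftRelation θ φ) {ε : ℝ} (hε : 0 < ε)
    (W : ℕ) :
    ∃ p₁ q₁ m : X, dist p₁ p < ε ∧ dist q₁ q < ε ∧ dist (θ m) (θ p) < ε ∧
      (∀ n ∈ Icc (0 : ℤ) W, dist ((g ^ n) p₁) ((g ^ n) m) ≤ γ) ∧
      ∀ n ∈ Icc (-(W : ℤ)) 0, dist ((g ^ n) q₁) ((g ^ n) m) ≤ γ := by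
  obtain ⟨hθc, hθs, hθg⟩ := hθ
  obtain ⟨hφc, hφs, hφg⟩ := hφ
  have hφu := CompactSpace.uniformContinuous_of_continuous hφc
  obtain ⟨κ, hκ, hφκ⟩ := Metric.uniformContinuous_iff.mp hφu η hη
  obtain ⟨κ', hκ', hφκ'⟩ := Metric.uniformContinuous_iff.mp hφu ε hε
  obtain ⟨δ, hδ, hbr⟩ := hcc'.exists_bracket_s11 (β := min κ (κ' / 2)) (by positivity)
  obtain ⟨x'₀, hx'₀⟩ := hφs y₀
  have hU : (φ ⁻¹' ball y₀ s).Nonempty := ⟨x'₀, by simpa [hx'₀] using hs⟩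
  have hUo : IsOpen (φ ⁻¹' ball y₀ s) := isOpen_ball.preimage hφc
  have hr : 0 < min ε (min (δ / 2) (κ' / 2)) := by positivity
  obtain ⟨t', ⟨a, ha⟩, x, hx, htw, hxp⟩ := exists_near_of_mem_liftRelation hθc hθs hφc hLo
    (hX't.dense_setOf_exists_zpow_natCast_mem hUo hU) hp hr
  obtain ⟨r', ⟨b, hb⟩, y, hy, hrw, hyq⟩ := exists_near_of_mem_liftRelation hθc hθs hφc hLo
    (hX't.dense_setOf_exists_zpow_neg_natCast_mem hUo hU) hq hr
  obtain ⟨c', hcs, hcu⟩ := hbr t' r' (by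
    linarith [dist_triangle t' w' r', dist_comm r' w', min_le_right ε (min (δ / 2) (κ' / 2)),
      min_le_left (δ / 2) (κ' / 2)])
  obtain ⟨m, hm⟩ := hθs (φ c')
  set W' : ℕ := max W (max a b)
  have hW : W ≤ W' := le_max_left _ _
  have haW : a ≤ W' := (le_max_left _ _).trans (le_max_right _ _)
  have hbW : b ≤ W' := (le_max_right _ _).trans (le_max_right _ _)
  refine ⟨x, y, m, hxp.trans_le (min_le_left _ _), hyq.trans_le (min_le_left _ _), ?_,
    fun n hn ↦ htrack.dist_zpow_le_of_dist_zpow_lt hθg hφg hφκ hx hm (lo := 0) (hi := W')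
      (k := a) ⟨by positivity, by exact_mod_cast haW⟩ (ball_subset_closedBall ha)
      (fun n hn ↦ (mem_Ws_iff.mp hcs n hn.1).trans_le (min_le_left _ _)) n
      ⟨hn.1, hn.2.trans (by exact_mod_cast hW)⟩,
    fun n hn ↦ htrack.dist_zpow_le_of_dist_zpow_lt hθg hφg hφκ hy hm (lo := -W') (hi := 0)
      (k := -b) ⟨by simpa using hbW, by simp⟩ (ball_subset_closedBall hb)
      (fun n hn ↦ (mem_Wu_iff.mp hcu n hn.2).trans_le (min_le_left _ _)) n
      ⟨(neg_le_neg (by exact_mod_cast hW)).trans hn.1, hn.2⟩⟩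
  rw [hm, liftRelation_subset hθc hφc hp]
  refine hφκ' ?_
  have hct : dist c' t' < min κ (κ' / 2) := by simpa [dist_comm] using mem_Ws_iff.mp hcs 0 le_rfl
  linarith [dist_triangle c' t' w', min_le_right κ (κ' / 2),
    min_le_right ε (min (δ / 2) (κ' / 2)), min_le_right (δ / 2) (κ' / 2)]

/-- A limit `m` of the tracking points lies on the stable set of `p` and on the unstable set of `q`
(expansiveness of `g` at scale `γ ≤ c`) in the common fibre, so `p = m = q` by bi-resolvingness. -/
theorem eq_of_forall_exists_shadow [CompactSpace X] {c γ : ℝ} (hgX : Expansive g c)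
    (hg : Continuous g) (hg' : Continuous g.symm) (hθ : Continuous θ) (hθu : UResolving g θ)
    (hθs : SResolving g θ) (hγc : γ ≤ c) {p q : X} (hpq : θ p = θ q)
    (h : ∀ ε > 0, ∀ W : ℕ, ∃ p₁ q₁ m : X, dist p₁ p < ε ∧ dist q₁ q < ε ∧
      dist (θ m) (θ p) < ε ∧ (∀ n ∈ Icc (0 : ℤ) W, dist ((g ^ n) p₁) ((g ^ n) m) ≤ γ) ∧
      ∀ n ∈ Icc (-(W : ℤ)) 0, dist ((g ^ n) q₁) ((g ^ n) m) ≤ γ) : p = q := by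
  choose p₁ q₁ m hp hq hm hfw hbw using fun j : ℕ ↦ h (1 / ((j : ℝ) + 1)) (by positivity) j
  obtain ⟨m₀, -, ψ, hψ, hlim⟩ := isCompact_univ.tendsto_subseq (x := m) fun _ ↦ mem_univ _
  have hψ' := hψ.tendsto_atTop
  have hθm₀ : θ m₀ = θ p := tendsto_nhds_unique ((hθ.tendsto m₀).comp hlim)
    ((tendsto_of_forall_dist_lt_one_div hm).comp hψ')
  have hclose : ∀ (a : ℕ → X) (x : X) (n : ℤ), Tendsto a atTop (𝓝 x) →
      (∀ᶠ j in atTop, dist ((g ^ n) (a (ψ j))) ((g ^ n) (m (ψ j))) ≤ γ) →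
      dist ((g ^ n) x) ((g ^ n) m₀) ≤ c := fun a x n ha hev ↦ by
    have hcn := Equiv.Perm.continuous_zpow hg hg' n
    exact (le_of_tendsto (((hcn.tendsto x).comp (ha.comp hψ')).dist
      ((hcn.tendsto m₀).comp hlim)) hev).trans hγc
  have hev : ∀ n : ℕ, ∀ᶠ j in atTop, n ≤ ψ j := fun n ↦ hψ'.eventually_ge_atTop n
  have hm₀p : m₀ = p := hθs p (hgX.mem_stableSet_of_forall_dist_le hg hg' fun n ↦
    hclose p₁ p n (tendsto_of_forall_dist_lt_one_div hp) ((hev n).mono fun j hj ↦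
      hfw (ψ j) n ⟨by positivity, by exact_mod_cast hj⟩)) (mem_stableSet_self_s11 g p) hθm₀
  have hm₀q : m₀ = q := hθu q (hgX.mem_unstableSet_of_forall_dist_le hg hg' fun n ↦
    hclose q₁ q (-n) (tendsto_of_forall_dist_lt_one_div hq) ((hev n).mono fun j hj ↦
      hbw (ψ j) (-n) ⟨by simpa using hj, by simp⟩)) (mem_unstableSet_self g q) (hθm₀.trans hpq)
  exact hm₀p.symm.trans hm₀q

theorem liftRelation_unique [CompactSpace X] [CompactSpace X'] (hX : IsSmale g)
    (hθ : IsFactorMap g f θ) (hθu : UResolving g θ) (hθs : SResolving g θ) {δ : ℝ} (hδ : 0 < δ)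
    (hsep : ∀ x y, θ x = θ y → dist x y < δ → x = y) (hLd : Dense (injectivityLocus θ))
    (hcc' : CanonicalCoords g') (hX't : TopTransitive g') (hφ : IsFactorMap g' f φ) {w' : X'}
    {p q : X} (hp : (w', p) ∈ liftRelation θ φ) (hq : (w', q) ∈ liftRelation θ φ) : p = q := by
  obtain ⟨hg, hg', ⟨c, hc, hgX⟩, -⟩ := hX
  have hLo := isOpen_injectivityLocus hθ.1 hδ hsep
  obtain ⟨y₀, hy₀⟩ := hLd.nonempty (h := ⟨φ w'⟩)
  obtain ⟨s, hs, hsL⟩ := Metric.isOpen_iff.mp hLo y₀ hy₀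
  obtain ⟨γ, -, hγc, η, hη, htrack⟩ := exists_tracksThrough hg hg' hθ.1 hδ hsep
    isClosed_closedBall ((closedBall_subset_ball (half_lt_self hs)).trans hsL) hc
  refine eq_of_forall_exists_shadow hgX hg hg' hθ.1 hθu hθs hγc
    ((liftRelation_subset hθ.1 hφ.1 hp).trans (liftRelation_subset hθ.1 hφ.1 hq).symm)
    fun ε hε W ↦ exists_shadow_of_mem_liftRelation hθ hφ hLo hcc' hX't (half_pos hs) hη htrack
      hp hq hε W

end Shadowing

theorem stmt11_general {X Y X' : Type*} [MetricSpace X] [CompactSpace X]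
    [MetricSpace Y] [CompactSpace Y] [MetricSpace X'] [CompactSpace X']
    (g : Equiv.Perm X) (f : Equiv.Perm Y) (g' : Equiv.Perm X')
    (hX : IsSmale g) (hXt : TopTransitive g)
    (hfe : ∃ c > 0, Expansive f c)
    (θ : X → Y) (hθ : IsFactorMap g f θ)
    (hθu : UResolving g θ) (hθs : SResolving g θ)
    (hθae : ∃ R ∈ residual Y, ∀ y ∈ R, ∃! x : X, θ x = y)
    (hX' : IsSmale g') (hX't : TopTransitive g')
    (φ : X' → Y) (hφ : IsFactorMap g' f φ) :
    ∃ ρ : X' → X, IsFactorMap g' g ρ ∧ φ = θ ∘ ρ := by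
  obtain ⟨c, hc, hf⟩ := hfe
  obtain ⟨δ, hδ, hsep⟩ := exists_fiber_separation hX hf hc hθ.1 hθ.2.2 hθu hθs
  have hLo := isOpen_injectivityLocus hθ.1 hδ hsep
  have hLd : Dense (injectivityLocus θ) := by
    obtain ⟨R, hR, hRL⟩ := hθae
    exact (dense_of_mem_residual hR).mono fun y hy _ ha _ hb ↦ (hRL y hy).unique ha hb
  have hLf := apply_mem_injectivityLocus_iff hθ.2.2
  choose ρ hρ using exists_mem_liftRelation hθ.2.1 (hX't.dense_preimage hφ hLo hLd hLf)
  have hρθ x' : θ (ρ x') = φ x' := liftRelation_subset hθ.1 hφ.1 (hρ x')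
  have huniq {x' x} (h : (x', x) ∈ liftRelation θ φ) : x = ρ x' :=
    liftRelation_unique hX hθ hθu hθs hδ hsep hLd hX'.2.2.2 hX't hφ h (hρ x')
  have hgraph : {p : X' × X | p.2 = ρ p.1} = liftRelation θ φ :=
    Set.ext fun ⟨x', x⟩ ↦ ⟨fun (h : x = ρ x') ↦ h ▸ hρ x', huniq⟩
  have hρc : Continuous ρ := continuous_of_isClosed_graph (hgraph ▸ isClosed_closure)
  refine ⟨ρ, ⟨hρc, ?_, fun x' ↦ ?_⟩, funext fun x' ↦ (hρθ x').symm⟩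
  · exact surjective_of_dense_preimage_injectivityLocus hρc hρθ hφ.2.1
      (hXt.dense_preimage hθ hLo hLd hLf)
  · exact (huniq (map_mem_liftRelation hX.1 hX'.1 hθ.2.2 hφ.2.2 hLf (hρ x'))).symm

/-- If `(Y,f)` is almost Smale, witnessed by a transitive Smale space
`(X,g)` and a one-to-one a.e., u-resolving and s-resolving factor map `θ : X → Y`, then
every factor map `φ` from an irreducible Smale space `(X',g')` to `Y` factors through
`θ`. -/
theorem stmt11 {X Y X' : Type*} [MetricSpace X] [CompactSpace X]
    [MetricSpace Y] [CompactSpace Y] [MetricSpace X'] [CompactSpace X']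
    (g : Equiv.Perm X) (f : Equiv.Perm Y) (g' : Equiv.Perm X')
    (hX : IsSmale g) (hXt : TopTransitive g)
    (hfc : Continuous (⇑f)) (hfc' : Continuous (⇑f.symm)) (hfe : ∃ c > 0, Expansive f c)
    (θ : X → Y) (hθ : IsFactorMap g f θ)
    (hθu : UResolving g θ) (hθs : SResolving g θ)
    (hθae : ∃ R ∈ residual Y, ∀ y ∈ R, ∃! x : X, θ x = y)
    (hX' : IsSmale g') (hX't : TopTransitive g')
    (φ : X' → Y) (hφ : IsFactorMap g' f φ) :
    ∃ ρ : X' → X, IsFactorMap g' g ρ ∧ φ = θ ∘ ρ :=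
  stmt11_general g f g' hX hXt hfe θ hθ hθu hθs hθae hX' hX't φ hφ
end
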